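/- Let D be a filter on a set I, N a first-order structure, λ = ‖N‖ + |τ(N)|, and Δ the set of atomic formulas of the language of N. Let 𝒯 be the reduced power (^{ω>}λ, ⊴)^I/D of the partial order of finite sequences from λ under the initial-segment relation ⊴, and let κ = min{𝔱(𝒯), 𝔭(𝒯)}. Then the reduced power N^I/D is (κ,1,Δ)-saturated. -/

import Mathlib

open FirstOrder Cardinal

namespace Shelah1064

/-! ### Reduced products of first-order structures with respect to a filter -/

def rpSetoid {I : Type*} (D : Filter I) (M : I → Type*) : Setoid (∀ i, M i) where
  r f g := ∀ᶠ i in D, f i = g i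
  iseqv := ⟨fun _ => Filter.Eventually.of_forall fun _ => rfl,
    fun h => h.mono fun _ e => e.symm,
    fun h₁ h₂ => h₂.mp (h₁.mono fun _ e₁ e₂ => e₁.trans e₂)⟩

/-- The reduced product `∏ᵢ Mᵢ / D`. -/
def RedProd {I : Type*} (D : Filter I) (M : I → Type*) : Type _ :=
  Quotient (rpSetoid D M)

noncomputable instance RedProd.instStructure {I : Type*} {L : Language} (D : Filter I)
    (M : I → Type*) [∀ i, L.Structure (M i)] : L.Structure (RedProd D M) where
  funMap F x := Quotient.mk (rpSetoid D M) fun i =>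
    Language.Structure.funMap F fun k => (Quotient.out (s := rpSetoid D M) (x k)) i
  RelMap r x := ∀ᶠ i in D,
    Language.Structure.RelMap r fun k => (Quotient.out (s := rpSetoid D M) (x k)) i

/-- The reduced power `M^I/D`. -/
abbrev RedPow {I : Type*} (D : Filter I) (M : Type*) : Type _ := RedProd D fun _ : I => M

/-- The lift of a binary relation to the reduced product: it holds of two classes iff it holds
`D`-eventually of representatives. -/
def rpLiftRel {I : Type*} (D : Filter I) {M : I → Type*} (r : ∀ i, M i → M i → Prop)
    (x y : RedProd D M) : Prop :=
  ∀ᶠ i in D, r i (Quotient.out (s := rpSetoid D M) x i) (Quotient.out (s := rpSetoid D M) y i)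

/-! ### Saturation for sets of formulas -/

/-- An instance of a formula `φ(x̄,ȳ)` (with `ȳ` of some finite length `m`) with
parameters from `N`. -/
abbrev FmlInst (L : Language) (ε : ℕ) (N : Type*) :=
  Σ m : ℕ, L.Formula (Fin ε ⊕ Fin m) × (Fin m → N)

/-- Realization of an instance `φ(x̄, b̄)` at the tuple `x̄`. -/
def RealizesInst {L : Language} {N : Type*} [L.Structure N] {ε : ℕ} (x : Fin ε → N)
    (q : FmlInst L ε N) : Prop :=
  q.2.1.Realize (Sum.elim x q.2.2)

/-- `N` is `(κ, ε, Δ)`-saturated: every set of fewer than `κ` instances of formulas from `Δ`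
(in a fixed `ε`-tuple of free variables `x̄`, with parameters from `N`) which is finitely
satisfiable in `N` is realized in `N`. -/
def TupSaturated {L : Language} (κ : Cardinal) (ε : ℕ)
    (Δ : Set (Σ m : ℕ, L.Formula (Fin ε ⊕ Fin m))) (N : Type*) [L.Structure N] : Prop :=
  ∀ p : Set (FmlInst L ε N),
    (∀ q ∈ p, (⟨q.1, q.2.1⟩ : Σ m : ℕ, L.Formula (Fin ε ⊕ Fin m)) ∈ Δ) →
    #p < κ →
    (∀ s ⊆ p, s.Finite → ∃ x : Fin ε → N, ∀ q ∈ s, RealizesInst x q) →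
    ∃ x : Fin ε → N, ∀ q ∈ p, RealizesInst x q

/-- `(κ, atomically)`-saturated: `(κ,1,Δ)`-saturated where `Δ` is the set of atomic formulas
`φ(x,ȳ)`. -/
def AtomSaturated {L : Language} (κ : Cardinal) (N : Type*) [L.Structure N] : Prop :=
  TupSaturated κ 1 {q : Σ m : ℕ, L.Formula (Fin 1 ⊕ Fin m) | q.2.IsAtomic} N

/-- A (finite) conjunction of atomic formulas. -/
inductive IsConjAtomic {L : Language} {α : Type*} : ∀ {n : ℕ}, L.BoundedFormula α n → Prop
  | of_isAtomic {n} {φ : L.BoundedFormula α n} : φ.IsAtomic → IsConjAtomic φ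
  | inf {n} {φ ψ : L.BoundedFormula α n} :
      IsConjAtomic φ → IsConjAtomic ψ → IsConjAtomic (φ ⊓ ψ)

/-! ### Pre-cuts and the cardinals 𝔱, 𝔭 of a set with a transitive reflexive relation -/

/-- The cofinality of a subset `C` w.r.t. the relation `le`: the least cardinality of a
subset of `C` cofinal in `C`. -/
noncomputable def cofin {T : Type*} (le : T → T → Prop) (C : Set T) : Cardinal :=
  sInf { κ | ∃ S : Set T, S ⊆ C ∧ (∀ a ∈ C, ∃ b ∈ S, le a b) ∧ #S = κ }

/-- `(C₁, C₂)` is a `(κ₁,κ₂)`-pre-cut for the relation `le`. -/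
def IsPreCut {T : Type*} (le : T → T → Prop) (C₁ C₂ : Set T) (κ₁ κ₂ : Cardinal) : Prop :=
  (∀ a ∈ C₁ ∪ C₂, ∀ b ∈ C₁ ∪ C₂, le a b ∨ le b a) ∧
  (∀ a ∈ C₁, ∀ b ∈ C₂, le a b) ∧
  (¬ ∃ c : T, (∀ a ∈ C₁, le a c) ∧ (∀ b ∈ C₂, le c b)) ∧
  cofin le C₁ = κ₁ ∧ cofin (fun a b => le b a) C₂ = κ₂

def HasPreCut {T : Type*} (le : T → T → Prop) (κ₁ κ₂ : Cardinal) : Prop :=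
  ∃ C₁ C₂ : Set T, IsPreCut le C₁ C₂ κ₁ κ₂

/-- `𝔭(𝒯)`: the least `κ₁ + κ₂` over all `(κ₁,κ₂)`-pre-cuts with `κ₁, κ₂` infinite regular. -/
noncomputable def pCard {T : Type*} (le : T → T → Prop) : Cardinal :=
  sInf { κ | ∃ κ₁ κ₂ : Cardinal, κ₁.IsRegular ∧ κ₂.IsRegular ∧
    HasPreCut le κ₁ κ₂ ∧ κ = κ₁ + κ₂ }

/-- `𝔱(𝒯)`: the least infinite `κ` such that some strictly `le`-increasing `κ`-sequence
has no upper bound. -/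
noncomputable def tCard {T : Type*} (le : T → T → Prop) : Cardinal :=
  sInf { κ | ℵ₀ ≤ κ ∧ ∃ f : κ.ord.ToType → T,
    (∀ i j, i < j → le (f i) (f j) ∧ ¬ le (f j) (f i)) ∧ ¬ ∃ ub, ∀ i, le (f i) ub }

/-!
A node of the tree `𝒯 = (^{ω>}λ, ⊴)^I/D` can store, coordinatewise, a finite sequence of instances
of atomic formulas with parameters in `N`: using two distinct letters, finite sequences of such
instances are coded by finite sequences from `λ`, with coding and decoding respecting initial
segments. Enumerate a finitely satisfiable `p` with `|p| < κ` and build a strictly increasing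
sequence of good nodes, whose stored instances are almost everywhere satisfiable together with any
finite part of `p`, recording more and more of `p`: a successor step appends one instance. At a
limit stage `κ ≤ 𝔱` bounds the chain, and below that bound a good upper bound is found by pruning
once for each finite part of `p` to the longest good initial segment, passing the limits of this
pruning by separating elements, which exist as `κ ≤ 𝔭`. Choosing coordinatewise a solution of the
instances stored in the final node realizes `p`, by Łoś's theorem for atomic formulas.
-/

universe u

open Set Order

namespace RedProd

variable {I : Type*} {D : Filter I} {M : I → Type*}

def mk (D : Filter I) (f : ∀ i, M i) : RedProd D M := Quotient.mk (rpSetoid D M) f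

noncomputable def out (x : RedProd D M) : ∀ i, M i := Quotient.out (s := rpSetoid D M) x

theorem out_mk (f : ∀ i, M i) : ∀ᶠ i in D, (mk D f).out i = f i :=
  Quotient.mk_out (s := rpSetoid D M) f

theorem mk_out (x : RedProd D M) : mk D x.out = x := Quotient.out_eq x

theorem eq_iff {x y : RedProd D M} : x = y ↔ ∀ᶠ i in D, x.out i = y.out i := by
  refine ⟨fun h => h ▸ Filter.Eventually.of_forall fun _ => rfl, fun h => ?_⟩
  rw [← mk_out x, ← mk_out y]
  exact Quotient.sound h

variable {L : Language} [∀ i, L.Structure (M i)]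

theorem out_realize_term {γ : Type*} (t : L.Term γ) (v : γ → RedProd D M) :
    ∀ᶠ i in D, (t.realize v).out i = t.realize fun k => (v k).out i := by
  induction t with
  | var k => exact Filter.Eventually.of_forall fun _ => rfl
  | func F ts ih =>
    filter_upwards [out_mk (D := D) fun i => Language.Structure.funMap F fun k =>
      ((ts k).realize v).out i, Filter.eventually_all.2 ih] with i hi hts
    exact hi.trans (congrArg _ (funext hts))

theorem realize_iff_eventually {γ : Type*} {φ : L.Formula γ} (hφ : φ.IsAtomic)
    (v : γ → RedProd D M) : φ.Realize v ↔ ∀ᶠ i in D, φ.Realize fun k => (v k).out i := by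
  have hv : ∀ i, (fun k => (Sum.elim v (default : Fin 0 → RedProd D M) k).out i) =
      Sum.elim (fun k => (v k).out i) default := fun i => by
    funext k; rcases k with k | k
    · rfl
    · exact k.elim0
  cases hφ with
  | equal t₁ t₂ =>
    refine eq_iff.trans (Filter.eventually_congr ?_)
    filter_upwards [out_realize_term t₁ (Sum.elim v default),
      out_realize_term t₂ (Sum.elim v default)] with i h₁ h₂
    simp only [Language.Formula.Realize, Language.BoundedFormula.realize_bdEqual, h₁, h₂, hv]
  | rel R ts =>
    refine Filter.eventually_congr ?_
    filter_upwards [Filter.eventually_all.2 fun k => out_realize_term (ts k) (Sum.elim v default)]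
      with i hts
    change Language.Structure.RelMap R (fun k => ((ts k).realize (Sum.elim v default)).out i) ↔ _
    simp only [Language.Formula.Realize, Language.BoundedFormula.realize_rel, hts, hv]

end RedProd

structure PrefixCode (α β : Type*) where
  encode : List α → List β
  decode : List β → List α
  encode_nil : encode [] = []
  decode_encode (l : List α) : decode (encode l) = l
  encode_prefix {l₁ l₂ : List α} : l₁ <+: l₂ → encode l₁ <+: encode l₂
  decode_prefix {l₁ l₂ : List β} : l₁ <+: l₂ → decode l₁ <+: decode l₂

namespace PrefixCode

theorem decode_nil {α β : Type*} (code : PrefixCode α β) : code.decode [] = [] := by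
  simpa [code.encode_nil] using code.decode_encode []

variable {α β : Type*} (a b : β) (code : α ↪ List β)

def block (c : α) : List β := (code c).flatMap (fun l => [a, l]) ++ [b, b]

open scoped Classical in
/-- Reads a word pair by pair: `a ℓ` appends the letter `ℓ` to the block `acc` read so far, and
any other pair closes the block, which is decoded through `code`; decoding stops at the first
closed block outside the range of `code`. -/
noncomputable def decodeAux : List β → List β → List α
  | acc, x :: y :: rest =>
    if x = a then decodeAux (acc ++ [y]) rest
    else (Function.partialInv code acc).elim [] (· :: decodeAux [] rest)
  | _, _ => []

theorem decodeAux_flatMap (w z acc : List β) :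
    decodeAux a code acc (w.flatMap (fun l => [a, l]) ++ z) = decodeAux a code (acc ++ w) z := by
  induction w generalizing acc with
  | nil => simp
  | cons l w ih => simp [decodeAux, ih]

theorem decodeAux_block (hab : a ≠ b) (c : α) (z : List β) :
    decodeAux a code [] (block a b code c ++ z) = c :: decodeAux a code [] z := by
  simp [block, decodeAux_flatMap, decodeAux, hab.symm,
    Function.partialInv_left code.injective]

theorem decodeAux_prefix_append (acc l z : List β) :
    decodeAux a code acc l <+: decodeAux a code acc (l ++ z) := by
  match l with
  | [] | [_] => simp [decodeAux]
  | x :: y :: rest =>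
    simp only [List.cons_append, decodeAux]
    split_ifs
    · exact decodeAux_prefix_append _ rest z
    · cases Function.partialInv code acc with
      | none => exact List.prefix_refl _
      | some c => exact List.cons_prefix_cons.2 ⟨rfl, decodeAux_prefix_append [] rest z⟩

noncomputable def ofEmbedding (hab : a ≠ b) : PrefixCode α β where
  encode l := l.flatMap (block a b code)
  decode := decodeAux a code []
  encode_nil := rfl
  decode_encode l := by
    induction l with
    | nil => simp [decodeAux]
    | cons c l ih => rw [List.flatMap_cons, decodeAux_block a b code hab, ih]
  encode_prefix := by
    rintro _ _ ⟨z, rfl⟩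
    rw [List.flatMap_append]
    exact List.prefix_append _ _
  decode_prefix := by
    rintro l _ ⟨z, rfl⟩
    exact decodeAux_prefix_append a code [] l z

end PrefixCode

section Cofinality

variable {T : Type*} [Preorder T] {C S : Set T}

theorem cofin_le_of_subset (hSC : S ⊆ C) (hS : ∀ x ∈ C, ∃ y ∈ S, x ≤ y) :
    cofin (· ≤ ·) C ≤ #S :=
  csInf_le' ⟨S, hSC, hS, rfl⟩

theorem cofin_le_mk (C : Set T) : cofin (· ≤ ·) C ≤ #C :=
  cofin_le_of_subset subset_rfl fun x hx => ⟨x, hx, le_rfl⟩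

theorem exists_subset_mk_eq_cofin (C : Set T) :
    ∃ S ⊆ C, (∀ x ∈ C, ∃ y ∈ S, x ≤ y) ∧ #S = cofin (· ≤ ·) C := by
  obtain ⟨S, hSC, hS, h⟩ := csInf_mem (s := { κ | ∃ S : Set T, S ⊆ C ∧
    (∀ a ∈ C, ∃ b ∈ S, a ≤ b) ∧ #S = κ }) ⟨_, C, subset_rfl, fun x hx => ⟨x, hx, le_rfl⟩, rfl⟩
  exact ⟨S, hSC, hS, h⟩

theorem exists_forall_le_of_mk_lt_cofin (hC : IsChain (· ≤ ·) C) (hSC : S ⊆ C)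
    (hS : #S < cofin (· ≤ ·) C) : ∃ a ∈ C, ∀ s ∈ S, s ≤ a := by
  by_contra! h
  refine (cofin_le_of_subset hSC fun x hx => ?_).not_gt hS
  obtain ⟨s, hs, hsx⟩ := h x hx
  exact ⟨s, hs, (hC.total (hSC hs) hx).resolve_left hsx⟩

theorem aleph0_le_cofin (hC : IsChain (· ≤ ·) C) (hne : C.Nonempty)
    (hmax : ¬ ∃ b, IsGreatest C b) : ℵ₀ ≤ cofin (· ≤ ·) C := by
  by_contra! hfin
  obtain ⟨S, hSC, hS, hcard⟩ := exists_subset_mk_eq_cofin C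
  have : Finite S := Cardinal.lt_aleph0_iff_finite.1 (hcard ▸ hfin)
  obtain ⟨x, hx⟩ := hne
  obtain ⟨y, hy, -⟩ := hS x hx
  have : Nonempty S := ⟨⟨y, hy⟩⟩
  obtain ⟨b, hb⟩ := (directedOn_iff_directed.1 ((hC.mono hSC).directedOn)).finite_le
    (id : S → S)
  refine hmax ⟨b, hSC b.2, fun x hx => ?_⟩
  obtain ⟨y, hy, hxy⟩ := hS x hx
  exact hxy.trans (hb ⟨y, hy⟩)

/-- Index a cofinal `S ⊆ C` of size `θ` by `θ.ord`: each initial segment of `S` is too small to be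
cofinal, so has an upper bound in `C`, and these bounds along a cofinal set of indices are
cofinal in `C`. -/
theorem cofin_le_cof_ord (hC : IsChain (· ≤ ·) C) (hθ : ℵ₀ ≤ cofin (· ≤ ·) C) :
    cofin (· ≤ ·) C ≤ (cofin (· ≤ ·) C).ord.cof := by
  set θ := cofin (· ≤ ·) C
  obtain ⟨S, hSC, hS, hcard⟩ := exists_subset_mk_eq_cofin C
  obtain ⟨e⟩ := Cardinal.eq.1 (hcard.trans (Cardinal.mk_ord_toType θ).symm)
  have hsmall (u : θ.ord.ToType) : #((fun v => (e.symm v : T)) '' Iic u) < θ := by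
    refine Cardinal.mk_image_le.trans_lt ?_
    rw [← Iio_insert]
    exact Cardinal.mk_insert_le.trans_lt (Cardinal.add_lt_of_lt hθ
      (by simpa using Cardinal.mk_Iio_lt u) (Cardinal.one_lt_aleph0.trans_le hθ))
  choose a haC ha using fun u => exists_forall_le_of_mk_lt_cofin hC
    (by rintro _ ⟨v, -, rfl⟩; exact hSC (e.symm v).2) (hsmall u)
  obtain ⟨U, hU, hUcard⟩ := exists_cof_eq θ.ord.ToType
  rw [Ordinal.cof_toType] at hUcard
  refine (cofin_le_of_subset (S := a '' U) (by rintro _ ⟨u, -, rfl⟩; exact haC u) ?_).trans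
    (Cardinal.mk_image_le.trans hUcard.le)
  intro x hx
  obtain ⟨y, hy, hxy⟩ := hS x hx
  obtain ⟨u, hu, hle⟩ := hU (e ⟨y, hy⟩)
  exact ⟨a u, ⟨u, hu, rfl⟩, hxy.trans (ha u _ ⟨_, hle, by simp⟩)⟩

theorem isRegular_cofin (hC : IsChain (· ≤ ·) C) (hne : C.Nonempty)
    (hmax : ¬ ∃ b, IsGreatest C b) : (cofin (· ≤ ·) C).IsRegular :=
  ⟨aleph0_le_cofin hC hne hmax, cofin_le_cof_ord hC (aleph0_le_cofin hC hne hmax)⟩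

end Cofinality

section PreCuts

variable {T : Type*} [Preorder T]

theorem pCard_le_add {κ₁ κ₂ : Cardinal} (h₁ : κ₁.IsRegular) (h₂ : κ₂.IsRegular)
    (h : HasPreCut (T := T) (· ≤ ·) κ₁ κ₂) : pCard (T := T) (· ≤ ·) ≤ κ₁ + κ₂ :=
  csInf_le' ⟨κ₁, κ₂, h₁, h₂, h, rfl⟩

/-- Otherwise `(C₁, C₂)` is a pre-cut whose cofinalities are regular and smaller than `κ`. -/
theorem exists_mem_upperBounds_mem_lowerBounds {κ : Cardinal} (hκ : κ ≤ pCard (T := T) (· ≤ ·))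
    {C₁ C₂ : Set T} (hne₁ : C₁.Nonempty) (hne₂ : C₂.Nonempty) (hC : IsChain (· ≤ ·) (C₁ ∪ C₂))
    (h₁₂ : ∀ x ∈ C₁, ∀ y ∈ C₂, x ≤ y) (hκ₁ : #C₁ < κ) (hκ₂ : #C₂ < κ) :
    ∃ c ∈ upperBounds C₁, c ∈ lowerBounds C₂ := by
  by_contra! hsep
  have hreg₁ : (cofin (· ≤ ·) C₁).IsRegular :=
    isRegular_cofin (hC.mono subset_union_left) hne₁ fun ⟨b, hb, hbC⟩ =>
      hsep b hbC fun y hy => h₁₂ b hb y hy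
  have hreg₂ : (cofin (fun a b : T => b ≤ a) C₂).IsRegular :=
    isRegular_cofin (T := Tᵒᵈ) (hC.mono subset_union_right).symm hne₂ fun ⟨b, hb, hbC⟩ =>
      hsep b (fun x hx => h₁₂ x hx b hb) hbC
  have hcut : HasPreCut (· ≤ ·) (cofin (· ≤ ·) C₁) (cofin (fun a b : T => b ≤ a) C₂) :=
    ⟨C₁, C₂, fun _ ha _ hb => hC.total ha hb, h₁₂,
      fun ⟨c, hc₁, hc₂⟩ => hsep c hc₁ hc₂, rfl, rfl⟩
  have hκ₀ : ℵ₀ ≤ κ := hreg₁.aleph0_le.trans ((cofin_le_mk C₁).trans hκ₁.le)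
  exact (hκ.trans (pCard_le_add hreg₁ hreg₂ hcut)).not_gt (Cardinal.add_lt_of_lt hκ₀
    ((cofin_le_mk C₁).trans_lt hκ₁) ((cofin_le_mk (T := Tᵒᵈ) C₂).trans_lt hκ₂))

end PreCuts

section TreeNumber

theorem mk_range_le_card {T : Type*} {o : Ordinal} (f : Iio o → T) : #(range f) ≤ o.card := by
  have := Cardinal.mk_range_le_lift (f := f)
  rwa [Cardinal.mk_Iio_ordinal, Cardinal.lift_lift, Cardinal.lift_le] at this

variable {T : Type*} [Preorder T]

/-- `tCard` only speaks of sequences indexed by cardinals, so pass to a fundamental sequence. -/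
theorem bddAbove_range_of_card_lt_tCard {o : Ordinal} (ho : IsSuccLimit o)
    (hot : o.card < tCard (T := T) (· ≤ ·)) {f : Iio o → T} (hf : StrictMono f) :
    BddAbove (range f) := by
  obtain ⟨g, hg⟩ := Ordinal.exists_isFundamentalSeq (o := o) rfl
  set F : o.cof.ord.ToType → T := fun x => f (g (Ordinal.ToType.mk.symm x))
  have hF : ∀ x y, x < y → F x ≤ F y ∧ ¬ F y ≤ F x := fun x y hxy =>
    lt_iff_le_not_ge.1 (hf (hg.strictMono (Ordinal.ToType.mk.symm.strictMono hxy)))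
  obtain ⟨b, hb⟩ : ∃ b, ∀ x, F x ≤ b := by
    by_contra hunb
    exact ((Ordinal.cof_le_card o).trans_lt hot).not_ge
      (csInf_le' ⟨(Cardinal.isRegular_cof ho).aleph0_le, F, hF, hunb⟩)
  refine ⟨b, ?_⟩
  rintro _ ⟨a, rfl⟩
  obtain ⟨_, ⟨c, rfl⟩, hac⟩ := hg.isCofinal_range a
  exact (hf.monotone hac).trans (by simpa [F] using hb (Ordinal.ToType.mk c))

end TreeNumber

section Transfinite

theorem exists_transfinite_seq {T : Type*} (ν : Ordinal.{u})
    (S : ∀ o : Ordinal.{u}, (Iio o → T) → T → Prop)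
    (step : ∀ o ≤ ν, ∀ f : Iio o → T,
      (∀ a : Iio o, S a (fun b => f ⟨b, mem_Iio.2 ((mem_Iio.1 b.2).trans a.2)⟩) (f a)) →
        ∃ x, S o f x) :
    ∃ g : Ordinal.{u} → T, ∀ o ≤ ν, S o (fun a => g a) (g o) := by
  have : Nonempty T := by
    obtain ⟨x, -⟩ := step 0 zero_le (fun a => absurd (mem_Iio.1 a.2) zero_le.not_gt)
      fun a => absurd (mem_Iio.1 a.2) zero_le.not_gt
    exact ⟨x⟩
  let g : Ordinal.{u} → T := wellFounded_lt.fix fun o ih =>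
    Classical.epsilon (S o fun a => ih a a.2)
  have hg (o) : g o = Classical.epsilon (S o fun a => g a) := wellFounded_lt.fix_eq _ o
  refine ⟨g, fun o => ?_⟩
  induction o using WellFoundedLT.induction with
  | _ o ih =>
    intro ho
    rw [hg o]
    exact Classical.epsilon_spec (step o ho _ fun a => ih a a.2 ((mem_Iio.1 a.2).le.trans ho))

theorem exists_forall_of_transfinite_extension {T : Type*} {J : Type u} (r : T → T → Prop)
    [IsTrans T r] (P : T → Prop) (Q : J → T → Prop) (hQ : ∀ j x y, r x y → Q j x → Q j y)
    (hzero : ∃ t, P t) (hsucc : ∀ t, P t → ∀ j, ∃ t', r t t' ∧ P t' ∧ Q j t')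
    (hlim : ∀ o : Ordinal.{u}, IsSuccLimit o → o.card ≤ #J → ∀ f : Iio o → T,
      (∀ a b, a < b → r (f a) (f b)) → (∀ a, P (f a)) → ∃ t, (∀ a, r (f a) t) ∧ P t) :
    ∃ t, P t ∧ ∀ j, Q j t := by
  let rank := Ordinal.typein (WellOrderingRel (α := J))
  let μ := Ordinal.type (WellOrderingRel (α := J))
  obtain ⟨g, hg⟩ := exists_transfinite_seq μ
    (fun o f x => (∀ a, r (f a) x) ∧ P x ∧ ∀ j, rank j < o → Q j x) fun o hoμ f ih => by
      rcases Ordinal.zero_or_succ_or_isSuccLimit o with rfl | ⟨o, rfl⟩ | ho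
      · obtain ⟨t, ht⟩ := hzero
        exact ⟨t, fun a => absurd (mem_Iio.1 a.2) zero_le.not_gt, ht,
          fun j h => absurd h zero_le.not_gt⟩
      · have ho : o < μ := (lt_succ o).trans_le hoμ
        obtain ⟨j, hj⟩ := Ordinal.typein_surj _ ho
        obtain ⟨hlast, hP, hQlast⟩ := ih ⟨o, lt_succ o⟩
        obtain ⟨t, hrt, hPt, hQt⟩ := hsucc _ hP j
        refine ⟨t, fun a => ?_, hPt, fun j' hj' => ?_⟩
        · rcases (le_of_lt_succ (mem_Iio.1 a.2)).lt_or_eq with h | h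
          · exact _root_.trans (hlast ⟨a, h⟩) hrt
          · obtain rfl : a = ⟨o, lt_succ o⟩ := Subtype.ext h
            exact hrt
        · rcases (le_of_lt_succ hj').lt_or_eq with h | h
          · exact hQ _ _ _ hrt (hQlast j' h)
          · rwa [Ordinal.typein_injective _ (h.trans hj.symm)]
      · obtain ⟨t, hrt, hPt⟩ := hlim o ho
          (Ordinal.card_le_card hoμ |>.trans_eq (Ordinal.card_type _))
          f (fun a b hab => (ih b).1 ⟨a, hab⟩) (fun a => (ih a).2.1)
        refine ⟨t, hrt, hPt, fun j hj => ?_⟩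
        have hsucc : succ (rank j) < o := ho.succ_lt hj
        exact hQ _ _ _ (hrt ⟨_, hsucc⟩) ((ih ⟨_, hsucc⟩).2.2 j (lt_succ _))
  exact ⟨g μ, (hg μ le_rfl).2.1, fun j => (hg μ le_rfl).2.2 j (Ordinal.typein_lt_type _ j)⟩

end Transfinite

section PruningLemma

variable {T : Type u} [Preorder T]

/-- Meet the requirements one at a time along a decreasing sequence of upper bounds of `C`,
passing limit stages by separating `C` from the sequence built so far. -/
theorem exists_mem_upperBounds_forall {κ : Cardinal.{u}} (hκ : κ ≤ pCard (T := T) (· ≤ ·))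
    {C : Set T} (hne : C.Nonempty) (hC : IsChain (· ≤ ·) C) (hCκ : #C < κ) {W : Type u}
    (hW : #W < κ) (G : W → T → Prop) (hG : ∀ w, Antitone (G w)) {s₀ : T}
    (hs₀ : s₀ ∈ upperBounds C)
    (hprune : ∀ w, ∀ s ∈ upperBounds C, ∃ s' ≤ s, s' ∈ upperBounds C ∧ G w s') :
    ∃ s ∈ upperBounds C, ∀ w, G w s := by
  obtain ⟨s, hs, hG⟩ := exists_forall_of_transfinite_extension (· ≥ ·) (· ∈ upperBounds C) G
    (fun w _ _ h => hG w h) ⟨s₀, hs₀⟩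
    (fun s hs w => (hprune w s hs).imp fun _ h => h) fun o ho hoW f hf hfC => by
      have hchain : IsChain (· ≤ ·) (C ∪ range f) := by
        refine isChain_union.2 ⟨hC, (Monotone.isChain_range (f := OrderDual.toDual ∘ f)
          fun a b hab => ?_).symm, fun x hx _ ⟨a, ha⟩ _ => Or.inl (ha ▸ hfC a hx)⟩
        rcases hab.lt_or_eq with h | rfl
        exacts [hf a b h, le_rfl]
      obtain ⟨m, hmC, hmf⟩ := exists_mem_upperBounds_mem_lowerBounds hκ hne
        ⟨f ⟨0, ho.bot_lt⟩, mem_range_self _⟩ hchain (fun x hx _ ⟨a, ha⟩ => ha ▸ hfC a hx) hCκ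
        ((mk_range_le_card f).trans_lt (hoW.trans_lt hW))
      exact ⟨m, fun a => hmf (mem_range_self a), hmC⟩
  exact ⟨s, hs, hG⟩

end PruningLemma

theorem exists_longest_prefix {β : Type*} (P : List β → Prop) (l : List β) :
    ∃ m, m <+: l ∧ ∀ k, k <+: l → P k → P m ∧ k <+: m := by
  classical
  refine ⟨l.take (Nat.findGreatest (fun n => P (l.take n)) l.length), List.take_prefix _ _,
    fun k hk hPk => ?_⟩
  rw [List.prefix_iff_eq_take.1 hk] at hPk ⊢
  exact ⟨Nat.findGreatest_spec (P := fun n => P (l.take n)) hk.length_le hPk,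
    List.take_prefix_take_left (Nat.le_findGreatest hk.length_le hPk)⟩

section Tree

/-- The tree order of `𝒯 = (^{ω>}λ, ⊴)^I/D`. -/
instance RedPow.instPreorderList {I β : Type*} {D : Filter I} : Preorder (RedPow D (List β)) where
  le := rpLiftRel D fun _ => (· <+: ·)
  le_refl _ := Filter.Eventually.of_forall fun _ => List.prefix_refl _
  le_trans _ _ _ h₁ h₂ := h₂.mp (h₁.mono fun _ h h' => h.trans h')

theorem RedPow.le_def {I β : Type*} {D : Filter I} {x y : RedPow D (List β)} :
    x ≤ y ↔ ∀ᶠ i in D, x.out i <+: y.out i := Iff.rfl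

variable {I α β N J : Type u} {D : Filter I} (code : PrefixCode α β) (Sat : N → α → Prop)
  (c : J → I → α)

noncomputable def content (t : RedPow D (List β)) (i : I) : List α := code.decode (t.out i)

def IsCoded (t : RedPow D (List β)) : Prop := ∀ᶠ i in D, t.out i = code.encode (content code t i)

def IsSatisfiable (w : Finset J) (i : I) (L : List α) : Prop :=
  ∃ x : N, (∀ d ∈ L, Sat x d) ∧ ∀ j ∈ w, Sat x (c j i)

def IsConsistent (w : Finset J) (t : RedPow D (List β)) : Prop :=
  ∀ᶠ i in D, IsSatisfiable Sat c w i (content code t i)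

def IsGood (t : RedPow D (List β)) : Prop :=
  IsCoded code t ∧ ∀ w, IsConsistent code Sat c w t

def Records (j : J) (t : RedPow D (List β)) : Prop := ∀ᶠ i in D, c j i ∈ content code t i

variable {code Sat c}

theorem content_prefix {t t' : RedPow D (List β)} (h : t ≤ t') :
    ∀ᶠ i in D, content code t i <+: content code t' i :=
  Filter.Eventually.mono h fun _ h => code.decode_prefix h

theorem isConsistent_antitone (w : Finset J) : Antitone (IsConsistent (D := D) code Sat c w) :=
  fun _ _ h ht => (ht.and (content_prefix h)).mono fun _ ⟨⟨x, hx, hw⟩, hpre⟩ =>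
    ⟨x, fun d hd => hx d (hpre.mem hd), hw⟩

theorem records_mono (j : J) : Monotone (Records (D := D) code c j) :=
  fun _ _ h ht => (ht.and (content_prefix h)).mono fun _ ⟨hj, hpre⟩ => hpre.mem hj

theorem isGood_root (hfin : ∀ w, ∀ᶠ i in D, IsSatisfiable Sat c w i []) :
    IsGood code Sat c (RedProd.mk D fun _ => code.encode []) := by
  have hcontent : ∀ᶠ i in D, content code (RedProd.mk D fun _ => code.encode []) i = [] :=
    (RedProd.out_mk _).mono fun i hi => by rw [content, hi, code.decode_encode]
  refine ⟨?_, fun w => ?_⟩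
  · filter_upwards [RedProd.out_mk (D := D) fun _ => code.encode [], hcontent] with i h₁ h₂
    rw [h₁, h₂]
  · filter_upwards [hfin w, hcontent] with i h₁ h₂
    rwa [h₂]

/-- `s'` is the longest coded initial segment of `s` whose content is consistent with `w`. -/
theorem exists_prune (hfin : ∀ w, ∀ᶠ i in D, IsSatisfiable Sat c w i []) (w : Finset J)
    (s : RedPow D (List β)) :
    ∃ s' ≤ s, IsCoded code s' ∧ IsConsistent code Sat c w s' ∧
      ∀ t, IsCoded code t → IsConsistent code Sat c w t → t ≤ s → t ≤ s' := by
  let P (i : I) (l : List β) : Prop :=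
    l = code.encode (code.decode l) ∧ IsSatisfiable Sat c w i (code.decode l)
  choose m hms hm using fun i => exists_longest_prefix (P i) (s.out i)
  have hout := RedProd.out_mk (D := D) m
  have hP : ∀ᶠ i in D, P i (m i) := (hfin w).mono fun i hi =>
    (hm i [] List.nil_prefix ⟨by simp [code.decode_nil, code.encode_nil],
      code.decode_nil ▸ hi⟩).1
  refine ⟨RedProd.mk D m, ?_, ?_, ?_, fun t hcod hcons hts => ?_⟩
  · rw [RedPow.le_def]
    filter_upwards [hout] with i hi
    exact hi ▸ hms i
  · filter_upwards [hout, hP] with i hi hPi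
    simpa only [content, hi] using hPi.1
  · filter_upwards [hout, hP] with i hi hPi
    simpa only [content, hi] using hPi.2
  · rw [RedPow.le_def] at hts ⊢
    filter_upwards [hout, hcod, hcons, hts] with i hi hcodi hconsi htsi
    rw [hi]
    exact (hm i _ htsi ⟨hcodi, hconsi⟩).2

theorem exists_lt_isGood_records [D.NeBot] {t : RedPow D (List β)} (ht : IsGood code Sat c t)
    (j : J) : ∃ t', t < t' ∧ IsGood code Sat c t' ∧ Records code c j t' := by
  classical
  set t' : RedPow D (List β) := RedProd.mk D fun i => code.encode (content code t i ++ [c j i])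
  have hout := RedProd.out_mk (D := D) fun i => code.encode (content code t i ++ [c j i])
  have hcontent : ∀ᶠ i in D, content code t' i = content code t i ++ [c j i] :=
    hout.mono fun i hi => by rw [content, hi, code.decode_encode]
  have hle : t ≤ t' := by
    rw [RedPow.le_def]
    filter_upwards [hout, ht.1] with i hi hti
    rw [hi, hti]
    exact code.encode_prefix (List.prefix_append _ _)
  refine ⟨t', hle.lt_of_not_ge fun hge => ?_, ⟨?_, fun w => ?_⟩, ?_⟩
  · obtain ⟨i, hi, hpre⟩ := (hcontent.and (content_prefix (code := code) hge)).exists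
    have := hpre.length_le
    simp [hi] at this
  · filter_upwards [hout, hcontent] with i hi hci
    rw [hi, hci]
  · filter_upwards [ht.2 (insert j w), hcontent] with i ⟨x, hx, hw⟩ hci
    refine ⟨x, fun d hd => ?_, fun j' hj' => hw j' (Finset.mem_insert_of_mem hj')⟩
    rcases List.mem_append.1 (hci ▸ hd) with hd | hd
    · exact hx d hd
    · exact List.mem_singleton.1 hd ▸ hw j (Finset.mem_insert_self j w)
  · filter_upwards [hcontent] with i hi
    simp [hi]

theorem exists_isGood_mem_upperBounds {κ : Cardinal.{u}}
    (hκ : κ ≤ pCard (T := RedPow D (List β)) (· ≤ ·))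
    (hfin : ∀ w, ∀ᶠ i in D, IsSatisfiable Sat c w i []) (hJ : #(Finset J) < κ)
    {C : Set (RedPow D (List β))} (hne : C.Nonempty) (hC : IsChain (· ≤ ·) C) (hCκ : #C < κ)
    (hCgood : ∀ t ∈ C, IsGood code Sat c t) (hbdd : BddAbove C) :
    ∃ t ∈ upperBounds C, IsGood code Sat c t := by
  have hprune (w : Finset J) (s : RedPow D (List β)) (hs : s ∈ upperBounds C) :
      ∃ s' ≤ s, s' ∈ upperBounds C ∧ IsConsistent code Sat c w s' := by
    obtain ⟨s', hs's, -, hcons, hmax⟩ := exists_prune hfin w s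
    exact ⟨s', hs's, fun x hx => hmax x (hCgood x hx).1 ((hCgood x hx).2 w) (hs hx), hcons⟩
  obtain ⟨s₀, hs₀⟩ := hbdd
  obtain ⟨s, hs, hcons⟩ := exists_mem_upperBounds_forall hκ hne hC hCκ hJ
    (IsConsistent code Sat c) isConsistent_antitone hs₀ hprune
  obtain ⟨t, hts, hcod, -, hmax⟩ := exists_prune hfin ∅ s
  exact ⟨t, fun x hx => hmax x (hCgood x hx).1 ((hCgood x hx).2 ∅) (hs hx), hcod,
    fun w => isConsistent_antitone w hts (hcons w)⟩

theorem exists_eventually_sat_of_isGood [D.NeBot] {t : RedPow D (List β)}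
    (ht : IsGood code Sat c t) (hrec : ∀ j, Records code c j t) :
    ∃ f : I → N, ∀ j, ∀ᶠ i in D, Sat (f i) (c j i) := by
  obtain ⟨-, x, -⟩ := (ht.2 ∅).exists
  have : Nonempty N := ⟨x⟩
  refine ⟨fun i => Classical.epsilon fun x => ∀ d ∈ content code t i, Sat x d, fun j => ?_⟩
  filter_upwards [ht.2 ∅, hrec j] with i ⟨x, hx, _⟩ hj
  exact Classical.epsilon_spec (p := fun x => ∀ d ∈ content code t i, Sat x d) ⟨x, hx⟩ _ hj

end Tree

theorem exists_eventually_sat {I α β N J : Type u} {D : Filter I} [D.NeBot]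
    (code : PrefixCode α β) {κ : Cardinal.{u}}
    (ht : κ ≤ tCard (T := RedPow D (List β)) (· ≤ ·))
    (hp : κ ≤ pCard (T := RedPow D (List β)) (· ≤ ·)) (hJ : #(Finset J) < κ)
    (Sat : N → α → Prop) (c : J → I → α) (hfin : ∀ w, ∀ᶠ i in D, IsSatisfiable Sat c w i []) :
    ∃ f : I → N, ∀ j, ∀ᶠ i in D, Sat (f i) (c j i) := by
  obtain ⟨t, hgood, hrec⟩ := exists_forall_of_transfinite_extension (· < ·) (IsGood code Sat c)
    (Records code c) (fun j _ _ h => records_mono j h.le) ⟨_, isGood_root hfin⟩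
    (fun _ ht j => exists_lt_isGood_records ht j) fun o ho hoJ f hf hgood => by
      have hoκ : o.card < κ :=
        hoJ.trans_lt ((Cardinal.mk_le_of_injective Finset.singleton_injective).trans_lt hJ)
      have hmono : StrictMono f := fun a b => hf a b
      obtain ⟨t, ht, hgood⟩ := exists_isGood_mem_upperBounds hp hfin hJ
        ⟨f ⟨0, ho.bot_lt⟩, mem_range_self _⟩ hmono.monotone.isChain_range
        ((mk_range_le_card f).trans_lt hoκ) (forall_mem_range.2 hgood)
        (bddAbove_range_of_card_lt_tCard ho (hoκ.trans_le ht) hmono)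
      exact ⟨t, fun a => (hf a ⟨_, ho.succ_lt a.2⟩ (lt_succ a.1)).trans_le
        (ht (mem_range_self _)), hgood⟩
  exact exists_eventually_sat_of_isGood hgood hrec

section Saturation

theorem tCard_eq_zero_of_forall {T : Type*} {le : T → T → Prop} (h : ∀ x y, le x y) :
    tCard le = 0 := by
  rw [tCard, ← Cardinal.sInf_empty]
  congr 1
  refine eq_empty_of_forall_notMem fun κ hmem => ?_
  obtain ⟨hκ, f, hf, -⟩ := hmem
  have : Infinite κ.ord.ToType := Cardinal.aleph0_le_mk_iff.1 (by simpa using hκ)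
  obtain ⟨i, j, hij⟩ := exists_pair_lt κ.ord.ToType
  exact (hf i j hij).2 (h _ _)

theorem realize_of_isAtomic_of_subsingleton {L : Language} {M α : Type*} [L.Structure M]
    [Subsingleton M] (hrel : ∀ n, IsEmpty (L.Relations n)) {n : ℕ} {φ : L.BoundedFormula α n}
    (hφ : φ.IsAtomic) (v : α → M) (xs : Fin n → M) : φ.Realize v xs := by
  cases hφ with
  | equal t₁ t₂ => exact Subsingleton.elim _ _
  | rel R ts => exact (hrel _).elim R

theorem mk_fmlInst_le {L : FirstOrder.Language.{u, u}} {ε : ℕ} {N : Type u} :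
    #(FmlInst L ε N) ≤ max (#N + L.card) ℵ₀ := by
  set μ := max (#N + L.card) ℵ₀
  have hμ : ℵ₀ ≤ μ := le_max_right _ _
  have hfml (m : ℕ) : #(L.Formula (Fin ε ⊕ Fin m)) ≤ μ := by
    refine (Cardinal.mk_le_of_injective (f := fun φ => (⟨0, φ⟩ : Σ n, _))
      fun _ _ h => eq_of_heq (Sigma.mk.inj h).2).trans
      (Language.BoundedFormula.card_le.trans (max_le hμ ?_))
    rw [Cardinal.lift_uzero]
    refine (Cardinal.add_le_max _ _).trans (max_le (max_le ?_ ?_) hμ)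
    · exact (Cardinal.lt_aleph0_of_finite _).le.trans hμ
    · exact (self_le_add_left _ _).trans (le_max_left _ _)
  have hpar (m : ℕ) : #(Fin m → N) ≤ μ := by
    rw [Cardinal.mk_arrow, Cardinal.mk_fin, Cardinal.lift_natCast, Cardinal.lift_uzero]
    exact Cardinal.power_nat_le_max.trans (max_le_max (self_le_add_right _ _) le_rfl)
  calc #(FmlInst L ε N)
      ≤ Cardinal.sum fun _ : ℕ => μ * μ := by
        rw [Cardinal.mk_sigma]
        exact Cardinal.sum_le_sum _ _ fun m => by
          rw [Cardinal.mk_prod, Cardinal.lift_id, Cardinal.lift_id]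
          exact mul_le_mul' (hfml m) (hpar m)
    _ = μ := by simp [Cardinal.mul_eq_self hμ, Cardinal.aleph0_mul_eq hμ]

variable {L : Language} {I : Type*} {D : Filter I} {N : Type*} [L.Structure N]

noncomputable def instAt {ε : ℕ} (q : FmlInst L ε (RedPow D N)) (i : I) : FmlInst L ε N :=
  ⟨q.1, q.2.1, fun k => (q.2.2 k).out i⟩

theorem realizesInst_iff {ε : ℕ} {q : FmlInst L ε (RedPow D N)} (hq : q.2.1.IsAtomic)
    (x : Fin ε → RedPow D N) :
    RealizesInst x q ↔ ∀ᶠ i in D, RealizesInst (fun k => (x k).out i) (instAt q i) := by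
  refine (RedProd.realize_iff_eventually hq _).trans (Filter.eventually_congr
    (Filter.Eventually.of_forall fun i => ?_))
  unfold RealizesInst instAt
  congr! 1
  funext k
  rcases k with k | k <;> rfl

theorem atomSaturated_of_subsingleton [D.NeBot] [Subsingleton (N ⊕ L.Symbols)] (κ : Cardinal) :
    AtomSaturated (L := L) κ (RedPow D N) := by
  intro p hΔ _ hfs
  obtain ⟨x, -⟩ := hfs ∅ (empty_subset _) finite_empty
  obtain ⟨i⟩ := Filter.nonempty_of_neBot D
  have hrel (n : ℕ) : IsEmpty (L.Relations n) := ⟨fun R => Sum.inl_ne_inr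
    (Subsingleton.elim (α := N ⊕ L.Symbols) (.inl ((x 0).out i)) (.inr (.inr ⟨n, R⟩)))⟩
  have : Subsingleton N := (Sum.inl_injective (β := L.Symbols)).subsingleton
  have : Subsingleton (RedPow D N) := ⟨fun _ _ => RedProd.eq_iff.2
    (Filter.Eventually.of_forall fun _ => Subsingleton.elim _ _)⟩
  exact ⟨x, fun q hq => realize_of_isAtomic_of_subsingleton hrel (hΔ q hq) _ _⟩

end Saturation

theorem atomSaturated_of_le_tCard_pCard {L : FirstOrder.Language.{u, u}} {I N β : Type u}
    {D : Filter I} [D.NeBot] [L.Structure N] (code : PrefixCode (FmlInst L 1 N) β)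
    {κ : Cardinal.{u}}
    (ht : κ ≤ tCard (T := RedPow D (List β)) (· ≤ ·))
    (hp : κ ≤ pCard (T := RedPow D (List β)) (· ≤ ·)) :
    AtomSaturated (L := L) κ (RedPow D N) := by
  intro p hΔ hcard hfs
  obtain hfin | hinf := lt_or_ge #p ℵ₀
  · exact hfs p subset_rfl (Cardinal.lt_aleph0_iff_set_finite.1 hfin)
  have : Infinite p := Cardinal.aleph0_le_mk_iff.1 hinf
  obtain ⟨f, hf⟩ := exists_eventually_sat code ht hp
    (by rwa [Cardinal.mk_finset_of_infinite]) (fun y q => RealizesInst (fun _ => y) q)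
    (fun (q : p) i => instAt q.1 i) fun w => by
      obtain ⟨x, hx⟩ := hfs (Subtype.val '' (w : Set p)) (by simp) (w.finite_toSet.image _)
      filter_upwards [(Filter.eventually_all_finset w).2 fun q hq =>
        (realizesInst_iff (hΔ q q.2) x).1 (hx q ⟨q, hq, rfl⟩)] with i hi
      refine ⟨(x 0).out i, by simp, fun q hq => ?_⟩
      convert hi q hq using 5
  refine ⟨fun _ => RedProd.mk D f, fun q hq => (realizesInst_iff (hΔ q hq) _).2 ?_⟩
  filter_upwards [hf ⟨q, hq⟩, RedProd.out_mk (D := D) f] with i hi hfi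
  simpa only [hfi] using hi

/-- Let `D` be a filter on `I`, `N` a structure, `λ = ‖N‖ + |τ(N)|`, `Δ` the
atomic formulas, `𝒯 = (^{ω>}λ, ⊴)^I/D` and `κ = min{𝔱(𝒯), 𝔭(𝒯)}`.  Then `N^I/D` is
`(κ,1,Δ)`-saturated. -/
theorem redPow_atomically_saturated {L : FirstOrder.Language.{0, 0}} {I : Type}
    (D : Filter I) (N : Type) [L.Structure N] :
    AtomSaturated (L := L)
      (min
        (tCard (rpLiftRel D fun _ : I =>
          ((· <+: ·) : List ((#N + L.card).ord.ToType) → List ((#N + L.card).ord.ToType) → Prop)))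
        (pCard (rpLiftRel D fun _ : I =>
          ((· <+: ·) : List ((#N + L.card).ord.ToType) → List ((#N + L.card).ord.ToType) → Prop))))
      (RedPow D N) := by
  set A := (#N + L.card).ord.ToType
  obtain rfl | hD := D.eq_or_neBot
  · intro p _ hcard
    exact absurd hcard (not_lt_of_ge (((min_le_left _ _).trans_eq
      (tCard_eq_zero_of_forall fun _ _ => Filter.eventually_bot)).trans zero_le))
  have hA : #A = #(N ⊕ L.Symbols) := by simp [A, Language.card]
  rcases subsingleton_or_nontrivial A with hsub | _
  · have : Subsingleton (N ⊕ L.Symbols) :=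
      Cardinal.le_one_iff_subsingleton.1 (hA ▸ Cardinal.le_one_iff_subsingleton.2 hsub)
    exact atomSaturated_of_subsingleton _
  obtain ⟨a, b, hab⟩ := exists_pair_ne A
  obtain ⟨e⟩ : Nonempty (FmlInst L 1 N ↪ List A) := by
    rw [← Cardinal.le_def, Cardinal.mk_list_eq_max_mk_aleph0, Cardinal.mk_ord_toType]
    exact mk_fmlInst_le
  exact atomSaturated_of_le_tCard_pCard (PrefixCode.ofEmbedding a b e hab) (min_le_left _ _)
    (min_le_right _ _)

end Shelah1064
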